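/- arXiv:2307.11955 — 9 statements merged into one kernel-verified Lean document; each statement's English description precedes it below -/
import Mathlib

section
/- Fix a vector q ∈ ℝ^d, a learning rate η > 0, and a point x_t ∈ ℝ^d. Let ℓ̂ : ℝ → ℝ be continuously differentiable with ℓ̂' Lipschitz continuous, and let s : [0,1] → ℝ be the (unique) solution of s(0) = 0, s'(h) = η ℓ̂'(⟨q, x_t − s(h) q⟩). For each N ∈ ℕ define the iterates x_0^{(N)} = x_t and x_{k+1}^{(N)} = x_k^{(N)} − (η/N) ℓ̂'(⟨q, x_k^{(N)}⟩) q for k = 0,…,N−1. Then lim_{N→∞} x_N^{(N)} = x_t − s(1) q. -/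
/-!
The iterates `X N k` are exactly Euler's method with step `1/N` for the vector field
`F x = -(η ℓ̂'(⟨q, x⟩)) q`, and `h ↦ x_t - s(h) q` is the exact solution of `y' = F y`
from `x_t`.
Since `F` is Lipschitz (constant `K'`), each Euler step commits a local error `O(1/N²)`,
and propagating it through `N` steps amplifies it by at most `(1 + K'/N)^N ≤ exp K'`,
so the global error is `O(1/N)`.
-/

open scoped RealInnerProductSpace NNReal Topology
open Set Filter

section Euler

variable {E : Type*} [NormedAddCommGroup E] [NormedSpace ℝ E]

def eulerSeq (f : E → E) (h : ℝ) (x₀ : E) : ℕ → E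
  | 0 => x₀
  | k + 1 => eulerSeq f h x₀ k + h • f (eulerSeq f h x₀ k)

variable {f : E → E} {s : ℝ → E} {K : ℝ≥0} {M h : ℝ}

theorem euler_local_error_le (hf : LipschitzWith K f) {a : ℝ} (hh : 0 ≤ h)
    (hs : ∀ t ∈ Icc a (a + h), HasDerivWithinAt s (f (s t)) (Icc a (a + h)) t)
    (hM : ∀ t ∈ Icc a (a + h), ‖f (s t)‖ ≤ M) :
    ‖s (a + h) - s a - h • f (s a)‖ ≤ K * M * h ^ 2 := by
  have ha : a ∈ Icc a (a + h) := left_mem_Icc.2 (by linarith)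
  have hah : a + h ∈ Icc a (a + h) := right_mem_Icc.2 (by linarith)
  have hs_dev : ∀ t ∈ Icc a (a + h), ‖s t - s a‖ ≤ M * h := fun t ht => by
    have := (convex_Icc a (a + h)).norm_image_sub_le_of_norm_hasDerivWithin_le hs hM ha ht
    rw [Real.norm_of_nonneg (by linarith [ht.1])] at this
    nlinarith [ht.2, (norm_nonneg _).trans (hM a ha)]
  -- the defect `t ↦ s t - (t - a) • f (s a)` has derivative `f (s t) - f (s a) = O(K M h)`
  have hder : ∀ t ∈ Icc a (a + h), HasDerivWithinAt (fun t => s t - (t - a) • f (s a))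
      (f (s t) - f (s a)) (Icc a (a + h)) t := fun t ht => by
    simpa using (hs t ht).fun_sub (((hasDerivWithinAt_id t _).sub_const a).smul_const (f (s a)))
  have hder_le : ∀ t ∈ Icc a (a + h), ‖f (s t) - f (s a)‖ ≤ K * M * h := fun t ht => by
    calc ‖f (s t) - f (s a)‖ ≤ K * ‖s t - s a‖ := hf.norm_sub_le _ _
      _ ≤ K * (M * h) := by gcongr; exact hs_dev t ht
      _ = K * M * h := by ring
  have := (convex_Icc a (a + h)).norm_image_sub_le_of_norm_hasDerivWithin_le hder hder_le ha hah
  simp only [sub_self, zero_smul, sub_zero, add_sub_cancel_left, Real.norm_of_nonneg hh] at this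
  calc ‖s (a + h) - s a - h • f (s a)‖ = ‖s (a + h) - h • f (s a) - s a‖ := by
        rw [sub_right_comm]
    _ ≤ K * M * h * h := this
    _ = K * M * h ^ 2 := by ring

theorem le_mul_mul_pow_of_le_one_add_mul_add {e : ℕ → ℝ} {a δ : ℝ} (ha : 0 ≤ a)
    (hδ : 0 ≤ δ) (h₀ : e 0 ≤ 0) {n : ℕ} (hstep : ∀ k < n, e (k + 1) ≤ (1 + a) * e k + δ) :
    e n ≤ n * δ * (1 + a) ^ n := by
  induction n with
  | zero => simpa using h₀
  | succ n ih =>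
    have ih := ih fun k hk => hstep k (by omega)
    have hpow : 1 ≤ (1 + a) ^ (n + 1) := one_le_pow₀ (by linarith)
    calc e (n + 1) ≤ (1 + a) * e n + δ := hstep n n.lt_succ_self
      _ ≤ (1 + a) * (n * δ * (1 + a) ^ n) + δ * (1 + a) ^ (n + 1) := by
        gcongr
        exact le_mul_of_one_le_right hδ hpow
      _ = (n + 1 : ℕ) * δ * (1 + a) ^ (n + 1) := by push_cast; ring

theorem norm_eulerSeq_sub_le (hf : LipschitzWith K f) (hh : 0 ≤ h) {n : ℕ}
    (hs : ∀ t ∈ Icc 0 (n * h), HasDerivWithinAt s (f (s t)) (Icc 0 (n * h)) t)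
    (hM : ∀ t ∈ Icc 0 (n * h), ‖f (s t)‖ ≤ M) :
    ‖eulerSeq f h (s 0) n - s (n * h)‖ ≤ n * (K * M * h ^ 2) * (1 + h * K) ^ n := by
  have hM0 : 0 ≤ M := (norm_nonneg _).trans (hM 0 (left_mem_Icc.2 (by positivity)))
  refine le_mul_mul_pow_of_le_one_add_mul_add (e := fun k => ‖eulerSeq f h (s 0) k - s (k * h)‖)
    (by positivity) (by positivity) (by simp [eulerSeq]) fun k hk => ?_
  set c := eulerSeq f h (s 0) k
  have hsub : Icc (k * h) (k * h + h) ⊆ Icc 0 (n * h) :=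
    Icc_subset_Icc (by positivity) (by
      have : (k : ℝ) + 1 ≤ n := by exact_mod_cast hk
      nlinarith)
  have hlocal := euler_local_error_le hf hh
    (fun t ht => (hs t (hsub ht)).mono hsub) (fun t ht => hM t (hsub ht))
  have hsplit : eulerSeq f h (s 0) (k + 1) - s ((k + 1 : ℕ) * h) =
      (c - s (k * h)) + h • (f c - f (s (k * h)))
        - (s (k * h + h) - s (k * h) - h • f (s (k * h))) := by
    simp only [eulerSeq, c, smul_sub]; push_cast; rw [add_mul, one_mul]; abel
  calc ‖eulerSeq f h (s 0) (k + 1) - s ((k + 1 : ℕ) * h)‖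
      ≤ ‖c - s (k * h)‖ + ‖h • (f c - f (s (k * h)))‖
        + ‖s (k * h + h) - s (k * h) - h • f (s (k * h))‖ := by
        rw [hsplit]
        refine (norm_sub_le _ _).trans (by gcongr; exact norm_add_le _ _)
    _ ≤ ‖c - s (k * h)‖ + h * (K * ‖c - s (k * h)‖) + K * M * h ^ 2 := by
        rw [norm_smul, Real.norm_of_nonneg hh]
        gcongr
        exact hf.norm_sub_le _ _
    _ = (1 + h * K) * ‖c - s (k * h)‖ + K * M * h ^ 2 := by ring

theorem tendsto_eulerSeq (hf : LipschitzWith K f) {T : ℝ} (hT : 0 ≤ T)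
    (hs : ∀ t ∈ Icc 0 T, HasDerivWithinAt s (f (s t)) (Icc 0 T) t) :
    Tendsto (fun N : ℕ => eulerSeq f (T / N) (s 0) N) atTop (𝓝 (s T)) := by
  obtain ⟨M, hM⟩ : ∃ M, ∀ t ∈ Icc 0 T, ‖f (s t)‖ ≤ M :=
    isCompact_Icc.exists_bound_of_continuousOn <|
      hf.continuous.comp_continuousOn fun t ht => (hs t ht).continuousWithinAt
  rw [tendsto_iff_norm_sub_tendsto_zero]
  refine squeeze_zero' (.of_forall fun _ => norm_nonneg _)
    ?_ (tendsto_const_div_atTop_nhds_zero_nat (K * M * T ^ 2 * Real.exp (T * K)))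
  filter_upwards [eventually_ne_atTop 0] with N hN
  have hTN : (N : ℝ) * (T / N) = T := mul_div_cancel₀ T (Nat.cast_ne_zero.2 hN)
  have hM0 : 0 ≤ M := (norm_nonneg _).trans (hM 0 (left_mem_Icc.2 hT))
  have hgrowth : (1 + T / N * K) ^ N ≤ Real.exp (T * K) := by
    have h := Real.one_sub_div_pow_le_exp_neg (n := N) (t := -(T * K)) (by
      have : 0 ≤ T * K := by positivity
      linarith [N.cast_nonneg (α := ℝ)])
    convert h using 2 <;> ring
  have herr := norm_eulerSeq_sub_le (n := N) hf (div_nonneg hT N.cast_nonneg)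
    (hTN ▸ hs) (hTN ▸ hM)
  rw [hTN] at herr
  calc ‖eulerSeq f (T / N) (s 0) N - s T‖
      ≤ N * (K * M * (T / N) ^ 2) * (1 + T / N * K) ^ N := herr
    _ ≤ N * (K * M * (T / N) ^ 2) * Real.exp (T * K) := by gcongr
    _ = K * M * T ^ 2 * Real.exp (T * K) / N := by field_simp

end Euler

theorem iwa_update_limit_of_gradient_steps_general
    (d : ℕ) (q : EuclideanSpace ℝ (Fin d)) (η : ℝ)
    (xt : EuclideanSpace ℝ (Fin d))
    (l : ℝ → ℝ)
    (K : NNReal) (hlip : LipschitzWith K (deriv l))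
    (s : ℝ → ℝ) (hs0 : s 0 = 0)
    (hsODE : ∀ h ∈ Set.Icc (0 : ℝ) 1,
      HasDerivAt s (η * deriv l ⟪q, xt - s h • q⟫) h)
    (X : ℕ → ℕ → EuclideanSpace ℝ (Fin d))
    (hX0 : ∀ N, X N 0 = xt)
    (hXrec : ∀ N k, X N (k + 1) = X N k - (η / (N : ℝ) * deriv l ⟪q, X N k⟫) • q) :
    Filter.Tendsto (fun N => X N N) Filter.atTop (nhds (xt - s 1 • q)) := by
  set F : EuclideanSpace ℝ (Fin d) → EuclideanSpace ℝ (Fin d) :=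
    fun x => -(η * deriv l ⟪q, x⟫) • q
  obtain ⟨K', hF⟩ : ∃ K', LipschitzWith K' F := by
    have hF_comp :
        F = ContinuousLinearMap.toSpanSingleton ℝ (-η • q) ∘ deriv l ∘ innerSL ℝ q := by
      funext x
      simp [F, smul_smul, mul_comm]
    exact ⟨_, hF_comp ▸ ((ContinuousLinearMap.lipschitz _).comp hlip).comp
      (ContinuousLinearMap.lipschitz _)⟩
  have hflow : ∀ t ∈ Icc (0 : ℝ) 1,
      HasDerivWithinAt (fun t => xt - s t • q) (F (xt - s t • q)) (Icc 0 1) t := fun t ht => by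
    simpa [F, neg_smul] using ((hsODE t ht).smul_const q).const_sub xt |>.hasDerivWithinAt
  have hX : ∀ N k, X N k = eulerSeq F (1 / N) xt k := fun N k => by
    induction k with
    | zero => exact hX0 N
    | succ k ih => rw [hXrec, ih, eulerSeq]; simp only [F, smul_smul]; module
  simpa [hX, hs0] using tendsto_eulerSeq hF zero_le_one hflow

/-- The IWA update as a limit of `N` gradient steps with learning rate `η/N`
(Theorem 1 of Karampatziakis & Langford, 2011): the iterates
`x_{k+1}^{(N)} = x_k^{(N)} - (η/N) ℓ̂'(⟨q, x_k^{(N)}⟩) q`, started at `x_t`,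
converge (as `N → ∞`, after `N` steps) to `x_t - s(1) q`, where `s` is the
solution of `s(0) = 0`, `s'(h) = η ℓ̂'(⟨q, x_t - s(h) q⟩)`. -/
theorem iwa_update_limit_of_gradient_steps
    (d : ℕ) (q : EuclideanSpace ℝ (Fin d)) (η : ℝ) (hη : 0 < η)
    (xt : EuclideanSpace ℝ (Fin d))
    (l : ℝ → ℝ) (hl : ContDiff ℝ 1 l)
    (K : NNReal) (hlip : LipschitzWith K (deriv l))
    (s : ℝ → ℝ) (hs0 : s 0 = 0)
    (hsODE : ∀ h ∈ Set.Icc (0 : ℝ) 1,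
      HasDerivAt s (η * deriv l ⟪q, xt - s h • q⟫) h)
    (X : ℕ → ℕ → EuclideanSpace ℝ (Fin d))
    (hX0 : ∀ N, X N 0 = xt)
    (hXrec : ∀ N k, X N (k + 1) = X N k - (η / (N : ℝ) * deriv l ⟪q, X N k⟫) • q) :
    Filter.Tendsto (fun N => X N N) Filter.atTop (nhds (xt - s 1 • q)) :=
  iwa_update_limit_of_gradient_steps_general d q η xt l K hlip s hs0 hsODE X hX0 hXrec
end

section
/- Fix q ∈ ℝ^d with q ≠ 0, η > 0, x ∈ ℝ^d, and a convex, three times differentiable function ℓ̂ : ℝ → ℝ. Let s : [0,1] → ℝ be differentiable with s(0) = 0 and s'(h) = η ℓ̂'(⟨q, x − s(h) q⟩) for all h ∈ [0,1], and assume s' is continuous on [0,1]. Write p(h) = ⟨q, x − s(h) q⟩, g(h) = ℓ̂'(p(h)) q, g = g(0), ℓ(w) = ℓ̂(⟨q,w⟩), θ = x/η, and H(z) = (η/2)‖θ − z‖² + ℓ*(z), where ℓ*(z) = sup_w (⟨z,w⟩ − ℓ(w)). Suppose that either (i) for all h ∈ [0,1], ℓ̂'(p(h)) ≥ 0 and ℓ̂'''(p(h))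 ≥ 0, or (ii) for all h ∈ [0,1], ℓ̂'(p(h)) ≤ 0 and ℓ̂'''(p(h)) ≤ 0. Then the vector z = ∫₀¹ g(h) dh = (1/η) s(1) q satisfies H(z) ≤ H(g). -/
/-! Write `c(h) = ℓ̂'(p(h))`, so that `s' = η c` and `A = s(1)/η` is the mean of `c` on `[0,1]`.
In case (i), `s` increases, so `p` decreases and, `ℓ̂'` being monotone, so does `c`. Hence
`A ≤ c(0)`, some `h*` has `c(h*) = A` by the intermediate value theorem, and
`s(h*) ≤ s(1) = ηA`. Case (ii) is case (i) for `t ↦ -ℓ̂'(-t)` and `-s`.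

At any `w` with `⟨q, w⟩ = p(h*)` the vector `A q` is the gradient of `ℓ`, so Fenchel–Young is an
equality there: `ℓ*(A q) = A p(h*) - ℓ̂(p(h*))`, while `ℓ*(c(0) q) ≥ c(0) p(h*) - ℓ̂(p(h*))`.
What remains of `H(g) - H(z)` is `‖q‖² (c(0) - A) (η (c(0) + A) / 2 - s(h*)) ≥ 0`. -/

open scoped RealInnerProductSpace

open Set

lemma ConvexOn.add_deriv_mul_sub_le {S : Set ℝ} {f : ℝ → ℝ} (hf : ConvexOn ℝ S f) {y t : ℝ}
    (hy : y ∈ S) (ht : t ∈ S) (hd : DifferentiableAt ℝ f y) :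
    f y + deriv f y * (t - y) ≤ f t := by
  rcases lt_trichotomy y t with h | rfl | h
  · have hs := hf.deriv_le_slope hy ht h hd
    rw [slope_def_field, le_div_iff₀ (sub_pos.2 h)] at hs
    linarith
  · simp
  · have hs := hf.slope_le_deriv ht hy h hd
    rw [slope_def_field, div_le_iff₀ (sub_pos.2 h)] at hs
    linarith

section Conjugate

variable {E : Type*} [NormedAddCommGroup E] [InnerProductSpace ℝ E] {q : E} {f : ℝ → ℝ}

lemma exists_inner_eq (hq : q ≠ 0) (t : ℝ) : ∃ w : E, ⟪q, w⟫ = t :=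
  ⟨(t / ‖q‖ ^ 2) • q, by
    rw [real_inner_smul_right, real_inner_self_eq_norm_sq,
      div_mul_cancel₀ _ (pow_ne_zero 2 (norm_ne_zero_iff.2 hq))]⟩

lemma coe_mul_sub_le_iSup_inner_smul_sub (hq : q ≠ 0) (a t : ℝ) :
    ((a * t - f t : ℝ) : EReal) ≤ ⨆ w : E, ((⟪a • q, w⟫ - f ⟪q, w⟫ : ℝ) : EReal) := by
  obtain ⟨w, hw⟩ := exists_inner_eq hq t
  refine le_of_eq_of_le ?_ (le_iSup _ w)
  rw [real_inner_smul_left, hw]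

lemma iSup_inner_deriv_smul_sub_eq (hf : ConvexOn ℝ univ f) {t : ℝ}
    (hd : DifferentiableAt ℝ f t) (hq : q ≠ 0) :
    ⨆ w : E, ((⟪deriv f t • q, w⟫ - f ⟪q, w⟫ : ℝ) : EReal) = ((deriv f t * t - f t : ℝ) : EReal) := by
  refine le_antisymm (iSup_le fun w => ?_) (coe_mul_sub_le_iSup_inner_smul_sub hq _ _)
  have := hf.add_deriv_mul_sub_le (mem_univ t) (mem_univ ⟪q, w⟫) hd
  rw [EReal.coe_le_coe_iff, real_inner_smul_left]
  linarith

lemma half_mul_norm_sub_smul_sq_add_mul (η a σ : ℝ) (v : E) :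
    η / 2 * ‖v - a • q‖ ^ 2 + a * (⟪q, η • v⟫ - σ * ‖q‖ ^ 2)
      = η / 2 * ‖v‖ ^ 2 + ‖q‖ ^ 2 * (η / 2 * a ^ 2 - a * σ) := by
  rw [norm_sub_sq_real, norm_smul, mul_pow, Real.norm_eq_abs, sq_abs, real_inner_smul_right,
    real_inner_smul_right, real_inner_comm]
  ring

end Conjugate

lemma integral_eq_inv_mul_of_hasDerivAt {η : ℝ} (hη : η ≠ 0) {c s : ℝ → ℝ}
    (hs : ∀ h ∈ Icc (0 : ℝ) 1, HasDerivAt s (η * c h) h) (hc : ContinuousOn c (Icc 0 1)) :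
    ∫ h in (0 : ℝ)..1, c h = η⁻¹ * (s 1 - s 0) := by
  have hftc := intervalIntegral.integral_eq_sub_of_hasDerivAt (f' := fun h => η * c h)
    (by rwa [uIcc_of_le zero_le_one]) ((hc.intervalIntegrable_of_Icc zero_le_one).const_mul η)
  rw [intervalIntegral.integral_const_mul] at hftc
  rw [← hftc, inv_mul_cancel_left₀ hη]
lemma exists_eq_and_mul_nonpos_of_antitoneOn {η : ℝ} (hη : 0 < η) {c s : ℝ → ℝ} (hs0 : s 0 = 0)
    (hs : ∀ h ∈ Icc (0 : ℝ) 1, HasDerivAt s (η * c h) h) (hc : ContinuousOn c (Icc 0 1))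
    (hc_anti : AntitoneOn c (Icc 0 1)) (hs_mono : MonotoneOn s (Icc 0 1)) :
    ∃ h ∈ Icc (0 : ℝ) 1, c h = η⁻¹ * s 1 ∧
      (c 0 - η⁻¹ * s 1) * (s h - η / 2 * (c 0 + η⁻¹ * s 1)) ≤ 0 := by
  set A := η⁻¹ * s 1
  have hA : ∫ h in (0 : ℝ)..1, c h = A := by
    rw [integral_eq_inv_mul_of_hasDerivAt hη.ne' hs hc, hs0, sub_zero]
  have hint := hc.intervalIntegrable_of_Icc (μ := MeasureTheory.volume) zero_le_one
  have hA_le : A ≤ c 0 := by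
    simpa [hA] using intervalIntegral.integral_mono_on zero_le_one hint intervalIntegrable_const
      fun h hh => hc_anti (left_mem_Icc.2 zero_le_one) hh hh.1
  have hle_A : c 1 ≤ A := by
    simpa [hA] using intervalIntegral.integral_mono_on zero_le_one intervalIntegrable_const hint
      fun h hh => hc_anti hh (right_mem_Icc.2 zero_le_one) hh.2
  obtain ⟨h, hh, hch⟩ := intermediate_value_Icc' zero_le_one hc ⟨hle_A, hA_le⟩
  have hsh : s h ≤ η * A := by
    rw [mul_inv_cancel_left₀ hη.ne']
    exact hs_mono hh (right_mem_Icc.2 zero_le_one) hh.2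
  refine ⟨h, hh, hch, mul_nonpos_of_nonneg_of_nonpos (sub_nonneg.2 hA_le) ?_⟩
  nlinarith [mul_le_mul_of_nonneg_left hA_le hη.le]

lemma exists_eq_and_mul_nonpos_of_hasDerivAt {η : ℝ} (hη : 0 < η) {f s p : ℝ → ℝ}
    (hf : Monotone f) {b Q : ℝ} (hQ : 0 ≤ Q) (hp : ∀ h, p h = b - s h * Q) (hs0 : s 0 = 0)
    (hs : ∀ h ∈ Icc (0 : ℝ) 1, HasDerivAt s (η * f (p h)) h)
    (hc : ContinuousOn (fun h => f (p h)) (Icc 0 1))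
    (hsign : (∀ h ∈ Icc (0 : ℝ) 1, 0 ≤ f (p h)) ∨ ∀ h ∈ Icc (0 : ℝ) 1, f (p h) ≤ 0) :
    ∃ h ∈ Icc (0 : ℝ) 1, f (p h) = η⁻¹ * s 1 ∧
      (f (p 0) - η⁻¹ * s 1) * (s h - η / 2 * (f (p 0) + η⁻¹ * s 1)) ≤ 0 := by
  wlog hnonneg : ∀ h ∈ Icc (0 : ℝ) 1, 0 ≤ f (p h) generalizing f s p b
  · have hnonpos := hsign.resolve_left hnonneg
    obtain ⟨h, hh, heq, hle⟩ := this (f := fun t => -f (-t)) (s := -s) (p := -p) (b := -b)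
      (fun u v huv => neg_le_neg (hf (neg_le_neg huv))) (fun h => by simp [hp]; ring)
      (by simp [hs0]) (fun h hh => by simpa using (hs h hh).neg) (by simp only [Pi.neg_apply, neg_neg]; exact hc.neg)
      (Or.inl fun h hh => by simpa using hnonpos h hh) fun h hh => by simpa using hnonpos h hh
    refine ⟨h, hh, by simpa using heq, ?_⟩
    convert hle using 1
    simp only [Pi.neg_apply, neg_neg]
    ring
  have hs_mono : MonotoneOn s (Icc 0 1) :=
    monotoneOn_of_hasDerivWithinAt_nonneg (convex_Icc 0 1)
      (fun h hh => (hs h hh).continuousAt.continuousWithinAt)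
      (fun h hh => (hs h (interior_subset hh)).hasDerivWithinAt)
      fun h hh => mul_nonneg hη.le (hnonneg h (interior_subset hh))
  have hp_anti : AntitoneOn p (Icc 0 1) := fun u hu v hv huv => by
    rw [hp, hp]
    exact sub_le_sub_left (mul_le_mul_of_nonneg_right (hs_mono hu hv huv) hQ) b
  exact exists_eq_and_mul_nonpos_of_antitoneOn hη hs0 hs hc (hf.comp_antitoneOn hp_anti) hs_mono

theorem iwa_satisfies_H_le_general
    (d : ℕ) (q : EuclideanSpace ℝ (Fin d)) (hq : q ≠ 0) (η : ℝ) (hη : 0 < η)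
    (x : EuclideanSpace ℝ (Fin d))
    (l : ℝ → ℝ) (hconv : ConvexOn ℝ Set.univ l)
    (hd1 : Differentiable ℝ l)
    (s : ℝ → ℝ) (hs0 : s 0 = 0)
    (p : ℝ → ℝ) (hp : ∀ h, p h = ⟪q, x - s h • q⟫)
    (hsODE : ∀ h ∈ Set.Icc (0 : ℝ) 1, HasDerivAt s (η * deriv l (p h)) h)
    -- s' is continuous on [0,1]
    (hs'cont : ContinuousOn (fun h => η * deriv l (p h)) (Set.Icc (0 : ℝ) 1))
    -- g(h) = ℓ̂'(p(h)) q
    (G : ℝ → EuclideanSpace ℝ (Fin d)) (hG : ∀ h, G h = deriv l (p h) • q)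
    -- ℓ*(z) for ℓ(w) = ℓ̂(⟨q, w⟩)
    (lstar : EuclideanSpace ℝ (Fin d) → EReal)
    (hlstar : ∀ zz, lstar zz = ⨆ w, ((⟪zz, w⟫ - l ⟪q, w⟫ : ℝ) : EReal))
    -- H(z) = (η/2)‖θ - z‖² + ℓ*(z), θ = x/η
    (H : EuclideanSpace ℝ (Fin d) → EReal)
    (hH : ∀ zz, H zz = ((η / 2 * ‖η⁻¹ • x - zz‖ ^ 2 : ℝ) : EReal) + lstar zz)
    -- sign conditions: (i) or (ii)
    (hsign : (∀ h ∈ Set.Icc (0 : ℝ) 1,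
        0 ≤ deriv l (p h) ∧ 0 ≤ deriv (deriv (deriv l)) (p h))
      ∨ (∀ h ∈ Set.Icc (0 : ℝ) 1,
        deriv l (p h) ≤ 0 ∧ deriv (deriv (deriv l)) (p h) ≤ 0)) :
    (∫ h in (0 : ℝ)..1, G h) = (η⁻¹ * s 1) • q
      ∧ H ((η⁻¹ * s 1) • q) ≤ H (G 0) := by
  have hp' : ∀ h, p h = ⟪q, x⟫ - s h * ‖q‖ ^ 2 := fun h => by
    rw [hp, inner_sub_right, real_inner_smul_right, real_inner_self_eq_norm_sq]
  have hc : ContinuousOn (fun h => deriv l (p h)) (Icc 0 1) :=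
    (continuousOn_const.mul hs'cont).congr fun h _ => (inv_mul_cancel_left₀ hη.ne' _).symm
  refine ⟨?_, ?_⟩
  · simp_rw [hG, intervalIntegral.integral_smul_const,
      integral_eq_inv_mul_of_hasDerivAt hη.ne' hsODE hc, hs0, sub_zero]
  have hl'_mono : Monotone (deriv l) :=
    monotoneOn_univ.mp (hconv.monotoneOn_deriv fun y _ => hd1 y)
  obtain ⟨h, -, hA, hkey⟩ := exists_eq_and_mul_nonpos_of_hasDerivAt hη hl'_mono
    (sq_nonneg ‖q‖) hp' hs0 hsODE hc
    (hsign.imp (forall₂_imp fun _ _ => And.left) (forall₂_imp fun _ _ => And.left))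
  rw [← hA] at hkey ⊢
  have hquad (a : ℝ) : η / 2 * ‖η⁻¹ • x - a • q‖ ^ 2 + a * p h
      = η / 2 * ‖η⁻¹ • x‖ ^ 2 + ‖q‖ ^ 2 * (η / 2 * a ^ 2 - a * s h) := by
    rw [hp', ← half_mul_norm_sub_smul_sq_add_mul, smul_inv_smul₀ hη.ne']
  rw [hH, hH, hlstar, hlstar, hG, iSup_inner_deriv_smul_sub_eq hconv (hd1 _) hq]
  calc ((η / 2 * ‖η⁻¹ • x - deriv l (p h) • q‖ ^ 2 : ℝ) : EReal)
        + ((deriv l (p h) * p h - l (p h) : ℝ) : EReal)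
      ≤ ((η / 2 * ‖η⁻¹ • x - deriv l (p 0) • q‖ ^ 2 : ℝ) : EReal)
        + ((deriv l (p 0) * p h - l (p h) : ℝ) : EReal) := by
        rw [← EReal.coe_add, ← EReal.coe_add, EReal.coe_le_coe_iff]
        linarith [hquad (deriv l (p h)), hquad (deriv l (p 0)),
          mul_nonpos_of_nonneg_of_nonpos (sq_nonneg ‖q‖) hkey]
    _ ≤ _ := add_le_add_right (coe_mul_sub_le_iSup_inner_smul_sub hq _ _) _

/-- IWA updates satisfy `H(z) ≤ H(g)` (Theorem 3.2 / `th:iwa`): under the sign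
conditions on `ℓ̂'` and `ℓ̂'''` along the gradient flow, the IWA dual vector
`z = ∫₀¹ g(h) dh = (1/η) s(1) q` satisfies `H(z) ≤ H(g)`, where
`H(z) = ψ*(θ - z) + ℓ*(z)` with `ψ*(θ) = (η/2)‖θ‖²` and `θ = x/η`. -/
theorem iwa_satisfies_H_le
    (d : ℕ) (q : EuclideanSpace ℝ (Fin d)) (hq : q ≠ 0) (η : ℝ) (hη : 0 < η)
    (x : EuclideanSpace ℝ (Fin d))
    (l : ℝ → ℝ) (hconv : ConvexOn ℝ Set.univ l)
    (hd1 : Differentiable ℝ l) (hd2 : Differentiable ℝ (deriv l))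
    (hd3 : Differentiable ℝ (deriv (deriv l)))
    (s : ℝ → ℝ) (hs0 : s 0 = 0)
    (p : ℝ → ℝ) (hp : ∀ h, p h = ⟪q, x - s h • q⟫)
    (hsODE : ∀ h ∈ Set.Icc (0 : ℝ) 1, HasDerivAt s (η * deriv l (p h)) h)
    -- s' is continuous on [0,1]
    (hs'cont : ContinuousOn (fun h => η * deriv l (p h)) (Set.Icc (0 : ℝ) 1))
    -- g(h) = ℓ̂'(p(h)) q
    (G : ℝ → EuclideanSpace ℝ (Fin d)) (hG : ∀ h, G h = deriv l (p h) • q)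
    -- ℓ*(z) for ℓ(w) = ℓ̂(⟨q, w⟩)
    (lstar : EuclideanSpace ℝ (Fin d) → EReal)
    (hlstar : ∀ zz, lstar zz = ⨆ w, ((⟪zz, w⟫ - l ⟪q, w⟫ : ℝ) : EReal))
    -- H(z) = (η/2)‖θ - z‖² + ℓ*(z), θ = x/η
    (H : EuclideanSpace ℝ (Fin d) → EReal)
    (hH : ∀ zz, H zz = ((η / 2 * ‖η⁻¹ • x - zz‖ ^ 2 : ℝ) : EReal) + lstar zz)
    -- sign conditions: (i) or (ii)
    (hsign : (∀ h ∈ Set.Icc (0 : ℝ) 1,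
        0 ≤ deriv l (p h) ∧ 0 ≤ deriv (deriv (deriv l)) (p h))
      ∨ (∀ h ∈ Set.Icc (0 : ℝ) 1,
        deriv l (p h) ≤ 0 ∧ deriv (deriv (deriv l)) (p h) ≤ 0)) :
    (∫ h in (0 : ℝ)..1, G h) = (η⁻¹ * s 1) • q
      ∧ H ((η⁻¹ * s 1) • q) ≤ H (G 0) :=
  iwa_satisfies_H_le_general d q hq η hη x l hconv hd1 s hs0 p hp hsODE hs'cont G hG lstar hlstar H
    hH hsign
end

section
/- Fix q ∈ ℝ^d, η > 0, x ∈ ℝ^d, and a convex, three times differentiable function ℓ̂ : ℝ → ℝ. Let s : [0,1] → ℝ be three times differentiable with s(0) = 0 and s'(h) = η ℓ̂'(⟨q, x − s(h) q⟩) for all h ∈ [0,1], and write p(h) = ⟨q, x − s(h) q⟩. If ℓ̂'(p(h)) ≥ 0 and ℓ̂'''(p(h)) ≥ 0 for all h ∈ [0,1], then for all h ∈ [0,1]: s'(h) ≥ 0, s''(h) ≤ 0, and s'''(h) ≥ 0; that is, s' is non-negative, non-increasing, and convex on [0,1]. -/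
open scoped RealInnerProductSpace

lemma mono_hasDerivAt_nonneg {f : ℝ → ℝ} (hf : Monotone f) {x c : ℝ}
    (h : HasDerivAt f c x) : 0 ≤ c := by
  have ht := hasDerivAt_iff_tendsto_slope.mp h
  refine ge_of_tendsto ht ?_
  filter_upwards [self_mem_nhdsWithin] with y hy
  rw [slope_def_field, div_eq_inv_mul]
  rcases lt_or_gt_of_ne (Ne.symm hy) with hlt | hlt
  · exact mul_nonneg (inv_nonneg.2 (sub_nonneg.2 hlt.le)) (sub_nonneg.2 (hf hlt.le))
  · have : f y ≤ f x := hf hlt.le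
    have h1 : (y - x)⁻¹ ≤ 0 := inv_nonpos.2 (sub_nonpos.2 hlt.le)
    have h2 : f y - f x ≤ 0 := sub_nonpos.2 this
    nlinarith

lemma eq_of_hasDerivAt_Icc {f g : ℝ → ℝ} {c1 c2 : ℝ}
    (heq : ∀ t ∈ Set.Icc (0:ℝ) 1, f t = g t) {h : ℝ} (hh : h ∈ Set.Icc (0:ℝ) 1)
    (hf : HasDerivAt f c1 h) (hg : HasDerivAt g c2 h) : c1 = c2 := by
  have hU : UniqueDiffWithinAt ℝ (Set.Icc (0:ℝ) 1) h :=
    (uniqueDiffOn_Icc (by norm_num : (0:ℝ) < 1)) h hh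
  have h1 : HasDerivWithinAt f c1 (Set.Icc 0 1) h := hf.hasDerivWithinAt
  have h2 : HasDerivWithinAt f c2 (Set.Icc 0 1) h :=
    (hg.hasDerivWithinAt).congr heq (heq h hh)
  rw [← h1.derivWithin hU, ← h2.derivWithin hU]

/-- Lemma 3.3 (`lemma:ell`), case 1: if `ℓ̂'(p(h)) ≥ 0` and `ℓ̂'''(p(h)) ≥ 0`
along the gradient flow, then the derivative `s'` of the IWA scaling function
is non-negative, non-increasing, and convex on `[0,1]` (equivalently,
`s' ≥ 0`, `s'' ≤ 0`, `s''' ≥ 0`). -/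
theorem iwa_scaling_derivative_props_case1
    (d : ℕ) (q : EuclideanSpace ℝ (Fin d)) (η : ℝ) (hη : 0 < η)
    (x : EuclideanSpace ℝ (Fin d))
    (l : ℝ → ℝ) (hconv : ConvexOn ℝ Set.univ l)
    (hd1 : Differentiable ℝ l) (hd2 : Differentiable ℝ (deriv l))
    (hd3 : Differentiable ℝ (deriv (deriv l)))
    (s s1 s2 s3 : ℝ → ℝ) (hs0 : s 0 = 0)
    (p : ℝ → ℝ) (hp : ∀ h, p h = ⟪q, x - s h • q⟫)
    (hs1 : ∀ h ∈ Set.Icc (0 : ℝ) 1, HasDerivAt s (s1 h) h)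
    (hODE : ∀ h ∈ Set.Icc (0 : ℝ) 1, s1 h = η * deriv l (p h))
    (hs2 : ∀ h ∈ Set.Icc (0 : ℝ) 1, HasDerivAt s1 (s2 h) h)
    (hs3 : ∀ h ∈ Set.Icc (0 : ℝ) 1, HasDerivAt s2 (s3 h) h)
    (hsign : ∀ h ∈ Set.Icc (0 : ℝ) 1,
      0 ≤ deriv l (p h) ∧ 0 ≤ deriv (deriv (deriv l)) (p h)) :
    (∀ h ∈ Set.Icc (0 : ℝ) 1, 0 ≤ s1 h ∧ s2 h ≤ 0 ∧ 0 ≤ s3 h)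
      ∧ AntitoneOn s1 (Set.Icc 0 1) ∧ ConvexOn ℝ (Set.Icc 0 1) s1 := by
  set K : ℝ := ⟪q, q⟫ with hKdef
  have hK : 0 ≤ K := real_inner_self_nonneg
  have hpfun : p = fun t => ⟪q, x⟫ - s t * K := by
    funext t
    rw [hp t, inner_sub_right, real_inner_smul_right]
  -- derivative of p
  have hpd : ∀ h ∈ Set.Icc (0:ℝ) 1, HasDerivAt p (-(s1 h * K)) h := by
    intro h hh
    rw [hpfun]
    exact ((hs1 h hh).mul_const K).const_sub _
  -- second derivative of l is nonneg
  have hmono : Monotone (deriv l) := by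
    have := hconv.monotoneOn_deriv (fun y _ => hd1 y)
    rwa [monotoneOn_univ] at this
  have hl2 : ∀ y, 0 ≤ deriv (deriv l) y :=
    fun y => mono_hasDerivAt_nonneg hmono (hd2 y).hasDerivAt
  -- formula for s2
  have hs2eq : ∀ h ∈ Set.Icc (0:ℝ) 1,
      s2 h = η * (deriv (deriv l) (p h) * -(s1 h * K)) := by
    intro h hh
    have hg : HasDerivAt (fun t => η * deriv l (p t))
        (η * (deriv (deriv l) (p h) * -(s1 h * K))) h :=
      (((hd2 (p h)).hasDerivAt.comp h (hpd h hh))).const_mul η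
    exact eq_of_hasDerivAt_Icc hODE hh (hs2 h hh) hg
  -- formula for s3
  have hs3eq : ∀ h ∈ Set.Icc (0:ℝ) 1,
      s3 h = η * ((deriv (deriv (deriv l)) (p h) * -(s1 h * K)) * -(s1 h * K)
        + deriv (deriv l) (p h) * -(s2 h * K)) := by
    intro h hh
    have hA : HasDerivAt (fun t => deriv (deriv l) (p t))
        (deriv (deriv (deriv l)) (p h) * -(s1 h * K)) h :=
      (hd3 (p h)).hasDerivAt.comp h (hpd h hh)
    have hB : HasDerivAt (fun t => -(s1 t * K)) (-(s2 h * K)) h :=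
      ((hs2 h hh).mul_const K).neg
    have hg : HasDerivAt (fun t => η * (deriv (deriv l) (p t) * -(s1 t * K)))
        (η * ((deriv (deriv (deriv l)) (p h) * -(s1 h * K)) * -(s1 h * K)
          + deriv (deriv l) (p h) * -(s2 h * K))) h := (hA.mul hB).const_mul η
    exact eq_of_hasDerivAt_Icc hs2eq hh (hs3 h hh) hg
  -- sign facts
  have hs1nn : ∀ h ∈ Set.Icc (0:ℝ) 1, 0 ≤ s1 h := by
    intro h hh
    rw [hODE h hh]
    exact mul_nonneg hη.le (hsign h hh).1
  have hs2np : ∀ h ∈ Set.Icc (0:ℝ) 1, s2 h ≤ 0 := by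
    intro h hh
    rw [hs2eq h hh]
    have h1 := hl2 (p h)
    have h2 := hs1nn h hh
    nlinarith [mul_nonneg (mul_nonneg (mul_nonneg hη.le h1) h2) hK]
  have hs3nn : ∀ h ∈ Set.Icc (0:ℝ) 1, 0 ≤ s3 h := by
    intro h hh
    rw [hs3eq h hh]
    have h1 := hl2 (p h)
    have h2 := hs1nn h hh
    have h3 := hs2np h hh
    have h4 := (hsign h hh).2
    refine mul_nonneg hη.le (add_nonneg ?_ ?_)
    · have heq : deriv (deriv (deriv l)) (p h) * -(s1 h * K) * -(s1 h * K)
          = deriv (deriv (deriv l)) (p h) * (s1 h * K * (s1 h * K)) := by ring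
      rw [heq]
      exact mul_nonneg h4 (mul_self_nonneg _)
    · exact mul_nonneg h1 (by nlinarith)
  refine ⟨fun h hh => ⟨hs1nn h hh, hs2np h hh, hs3nn h hh⟩, ?_, ?_⟩
  · refine antitoneOn_of_deriv_nonpos (convex_Icc 0 1)
      (fun h hh => (hs2 h hh).continuousAt.continuousWithinAt) ?_ ?_
    · intro h hh
      rw [interior_Icc] at hh
      exact (hs2 h (Set.Ioo_subset_Icc_self hh)).differentiableAt.differentiableWithinAt
    · intro h hh
      rw [interior_Icc] at hh
      rw [(hs2 h (Set.Ioo_subset_Icc_self hh)).deriv]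
      exact hs2np h (Set.Ioo_subset_Icc_self hh)
  · have hev : ∀ h ∈ Set.Ioo (0:ℝ) 1, deriv s1 =ᶠ[nhds h] s2 := by
      intro h hh
      filter_upwards [isOpen_Ioo.mem_nhds hh] with y hy
      exact (hs2 y (Set.Ioo_subset_Icc_self hy)).deriv
    refine convexOn_of_deriv2_nonneg (convex_Icc 0 1)
      (fun h hh => (hs2 h hh).continuousAt.continuousWithinAt) ?_ ?_ ?_
    · intro h hh
      rw [interior_Icc] at hh
      exact (hs2 h (Set.Ioo_subset_Icc_self hh)).differentiableAt.differentiableWithinAt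
    · intro h hh
      rw [interior_Icc] at hh
      have : DifferentiableAt ℝ s2 h := (hs3 h (Set.Ioo_subset_Icc_self hh)).differentiableAt
      exact ((hev h hh).differentiableAt_iff.2 this).differentiableWithinAt
    · intro h hh
      rw [interior_Icc] at hh
      have : deriv (deriv s1) h = deriv s2 h := (hev h hh).deriv_eq
      simp only [Function.iterate_succ, Function.iterate_zero, Function.comp_apply, id]
      rw [this, (hs3 h (Set.Ioo_subset_Icc_self hh)).deriv]
      exact hs3nn h (Set.Ioo_subset_Icc_self hh)
end

section
/- Fix q ∈ ℝ^d, η > 0, x ∈ ℝ^d, and a convex, three times differentiable function ℓ̂ : ℝ → ℝ. Let s : [0,1] → ℝ be three times differentiable with s(0) = 0 and s'(h) = η ℓ̂'(⟨q, x − s(h) q⟩) for all h ∈ [0,1], and write p(h) = ⟨q, x − s(h) q⟩. If ℓ̂'(p(h)) ≤ 0 and ℓ̂'''(p(h)) ≤ 0 for all h ∈ [0,1], then for all h ∈ [0,1]: s'(h) ≤ 0, s''(h) ≥ 0, and s'''(h) ≤ 0; that is, s' is non-positive, non-decreasing, and concave on [0,1]. -/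
open scoped RealInnerProductSpace

lemma monotone_deriv_nonneg' {g : ℝ → ℝ} (hg : Monotone g) {g' y : ℝ}
    (h : HasDerivAt g g' y) : 0 ≤ g' := by
  have ht : Filter.Tendsto (slope g y) (nhdsWithin y (Set.Ioi y)) (nhds g') :=
    (hasDerivAt_iff_tendsto_slope.1 h).mono_left
      (nhdsWithin_mono y (by intro z hz; exact ne_of_gt hz))
  refine ge_of_tendsto ht ?_
  filter_upwards [self_mem_nhdsWithin] with z hz
  have hz' : (y : ℝ) < z := hz
  have := hg hz'.le
  rw [slope_def_field]
  exact div_nonneg (by linarith) (by linarith)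


/-- Lemma 3.3 (`lemma:ell`), case 2: if `ℓ̂'(p(h)) ≤ 0` and `ℓ̂'''(p(h)) ≤ 0`
along the gradient flow, then the derivative `s'` of the IWA scaling function
is non-positive, non-decreasing, and concave on `[0,1]` (equivalently,
`s' ≤ 0`, `s'' ≥ 0`, `s''' ≤ 0`). -/
theorem iwa_scaling_derivative_props_case2
    (d : ℕ) (q : EuclideanSpace ℝ (Fin d)) (η : ℝ) (hη : 0 < η)
    (x : EuclideanSpace ℝ (Fin d))
    (l : ℝ → ℝ) (hconv : ConvexOn ℝ Set.univ l)
    (hd1 : Differentiable ℝ l) (hd2 : Differentiable ℝ (deriv l))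
    (hd3 : Differentiable ℝ (deriv (deriv l)))
    (s s1 s2 s3 : ℝ → ℝ) (hs0 : s 0 = 0)
    (p : ℝ → ℝ) (hp : ∀ h, p h = ⟪q, x - s h • q⟫)
    (hs1 : ∀ h ∈ Set.Icc (0 : ℝ) 1, HasDerivAt s (s1 h) h)
    (hODE : ∀ h ∈ Set.Icc (0 : ℝ) 1, s1 h = η * deriv l (p h))
    (hs2 : ∀ h ∈ Set.Icc (0 : ℝ) 1, HasDerivAt s1 (s2 h) h)
    (hs3 : ∀ h ∈ Set.Icc (0 : ℝ) 1, HasDerivAt s2 (s3 h) h)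
    (hsign : ∀ h ∈ Set.Icc (0 : ℝ) 1,
      deriv l (p h) ≤ 0 ∧ deriv (deriv (deriv l)) (p h) ≤ 0) :
    (∀ h ∈ Set.Icc (0 : ℝ) 1, s1 h ≤ 0 ∧ 0 ≤ s2 h ∧ s3 h ≤ 0)
      ∧ MonotoneOn s1 (Set.Icc 0 1) ∧ ConcaveOn ℝ (Set.Icc 0 1) s1 := by
  set a : ℝ := ⟪q, x⟫ with ha
  set c : ℝ := ⟪q, q⟫ with hc
  have hcn : 0 ≤ c := real_inner_self_nonneg
  have hpfun : p = fun h => a - s h * c := by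
    funext h
    rw [hp h, inner_sub_right, real_inner_smul_right]
  -- second derivative of l is nonneg
  have hmono : Monotone (deriv l) := by
    have := hconv.monotoneOn_deriv (fun y _ => hd1 y)
    intro u v huv
    exact this (Set.mem_univ u) (Set.mem_univ v) huv
  have hl2 : ∀ y, 0 ≤ deriv (deriv l) y := fun y =>
    monotone_deriv_nonneg' hmono (hd2 y).hasDerivAt
  have uD : UniqueDiffOn ℝ (Set.Icc (0:ℝ) 1) := uniqueDiffOn_Icc zero_lt_one
  -- derivative of p
  have hpD : ∀ h ∈ Set.Icc (0:ℝ) 1, HasDerivAt p (-(s1 h * c)) h := by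
    intro h hh
    rw [hpfun]
    exact ((hs1 h hh).mul_const c).const_sub a
  -- s1 ≤ 0
  have hs1le : ∀ h ∈ Set.Icc (0:ℝ) 1, s1 h ≤ 0 := by
    intro h hh
    rw [hODE h hh]
    exact mul_nonpos_of_nonneg_of_nonpos hη.le (hsign h hh).1
  -- formula for s2
  have hfD : ∀ h ∈ Set.Icc (0:ℝ) 1,
      HasDerivAt (fun y => η * deriv l (p y))
        (η * (deriv (deriv l) (p h) * -(s1 h * c))) h := by
    intro h hh
    exact (((hd2 (p h)).hasDerivAt.comp h (hpD h hh))).const_mul η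
  have s2eq : ∀ h ∈ Set.Icc (0:ℝ) 1,
      s2 h = η * (deriv (deriv l) (p h) * -(s1 h * c)) := by
    intro h hh
    have h1 : HasDerivWithinAt s1 (s2 h) (Set.Icc 0 1) h := (hs2 h hh).hasDerivWithinAt
    have h2 : HasDerivWithinAt s1 (η * (deriv (deriv l) (p h) * -(s1 h * c)))
        (Set.Icc 0 1) h :=
      (hfD h hh).hasDerivWithinAt.congr (fun y hy => hODE y hy) (hODE h hh)
    rw [← h1.derivWithin (uD h hh), h2.derivWithin (uD h hh)]
  have hs2ge : ∀ h ∈ Set.Icc (0:ℝ) 1, (0:ℝ) ≤ s2 h := by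
    intro h hh
    rw [s2eq h hh]
    have : 0 ≤ -(s1 h * c) := by
      have := mul_nonpos_of_nonpos_of_nonneg (hs1le h hh) hcn
      linarith
    exact mul_nonneg hη.le (mul_nonneg (hl2 _) this)
  -- formula for s3
  have hgD : ∀ h ∈ Set.Icc (0:ℝ) 1,
      HasDerivAt (fun y => η * (deriv (deriv l) (p y) * -(s1 y * c)))
        (η * ((deriv (deriv (deriv l)) (p h) * -(s1 h * c)) * -(s1 h * c)
          + deriv (deriv l) (p h) * -(s2 h * c))) h := by
    intro h hh
    have A : HasDerivAt (fun y => deriv (deriv l) (p y))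
        (deriv (deriv (deriv l)) (p h) * -(s1 h * c)) h :=
      (hd3 (p h)).hasDerivAt.comp h (hpD h hh)
    have B : HasDerivAt (fun y => -(s1 y * c)) (-(s2 h * c)) h :=
      ((hs2 h hh).mul_const c).neg
    exact (A.mul B).const_mul η
  have s3eq : ∀ h ∈ Set.Icc (0:ℝ) 1,
      s3 h = η * ((deriv (deriv (deriv l)) (p h) * -(s1 h * c)) * -(s1 h * c)
          + deriv (deriv l) (p h) * -(s2 h * c)) := by
    intro h hh
    have h1 : HasDerivWithinAt s2 (s3 h) (Set.Icc 0 1) h := (hs3 h hh).hasDerivWithinAt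
    have h2 := (hgD h hh).hasDerivWithinAt.congr (fun y hy => s2eq y hy) (s2eq h hh)
    rw [← h1.derivWithin (uD h hh), h2.derivWithin (uD h hh)]
  have hs3le : ∀ h ∈ Set.Icc (0:ℝ) 1, s3 h ≤ 0 := by
    intro h hh
    rw [s3eq h hh]
    have t1 : (deriv (deriv (deriv l)) (p h) * -(s1 h * c)) * -(s1 h * c) ≤ 0 := by
      have e : (deriv (deriv (deriv l)) (p h) * -(s1 h * c)) * -(s1 h * c)
          = deriv (deriv (deriv l)) (p h) * (s1 h * c) ^ 2 := by ring
      rw [e]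
      exact mul_nonpos_of_nonpos_of_nonneg (hsign h hh).2 (sq_nonneg _)
    have t2 : deriv (deriv l) (p h) * -(s2 h * c) ≤ 0 := by
      have : -(s2 h * c) ≤ 0 := by
        have := mul_nonneg (hs2ge h hh) hcn
        linarith
      exact mul_nonpos_of_nonneg_of_nonpos (hl2 _) this
    exact mul_nonpos_of_nonneg_of_nonpos hη.le (by linarith)
  refine ⟨fun h hh => ⟨hs1le h hh, hs2ge h hh, hs3le h hh⟩, ?_, ?_⟩
  · refine monotoneOn_of_deriv_nonneg (convex_Icc 0 1)
      (fun h hh => (hs2 h hh).continuousAt.continuousWithinAt)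
      (fun h hh => (hs2 h (interior_subset hh)).differentiableAt.differentiableWithinAt)
      (fun h hh => ?_)
    rw [(hs2 h (interior_subset hh)).deriv]
    exact hs2ge h (interior_subset hh)
  · refine concaveOn_of_deriv2_nonpos (convex_Icc 0 1)
      (fun h hh => (hs2 h hh).continuousAt.continuousWithinAt)
      (fun h hh => (hs2 h (interior_subset hh)).differentiableAt.differentiableWithinAt)
      ?_ ?_
    · intro h hh
      have hev : deriv s1 =ᶠ[nhds h] s2 :=
        Filter.eventuallyEq_of_mem (isOpen_interior.mem_nhds hh)
          (fun y hy => (hs2 y (interior_subset hy)).deriv)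
      exact ((hev.differentiableAt_iff).2
        (hs3 h (interior_subset hh)).differentiableAt).differentiableWithinAt
    · intro h hh
      have hev : deriv s1 =ᶠ[nhds h] s2 :=
        Filter.eventuallyEq_of_mem (isOpen_interior.mem_nhds hh)
          (fun y hy => (hs2 y (interior_subset hy)).deriv)
      have : deriv^[2] s1 h = deriv (deriv s1) h := by
        simp [Function.iterate_succ, Function.iterate_zero]
      rw [this, hev.deriv_eq, (hs3 h (interior_subset hh)).deriv]
      exact hs3le h (interior_subset hh)
end

section
/- Let s : [0,1] → ℝ be differentiable with s(0) = 0, s' continuous on [0,1], and s(h) = ∫₀ʰ s'(u) du. Suppose that either (i) s' is non-negative, non-increasing, and convex on [0,1], or (ii) s' is non-positive, non-decreasing, and concave on [0,1]. Then for every h ∈ [0,1]: (1/2)(s'(h) − s'(0))(s'(0) + s'(h)) ≤ (s'(h) − s'(0)) s(h). -/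
/-!
For `s'` non-negative, non-increasing and convex, the Hermite–Hadamard (trapezoid) bound gives
`s h = ∫₀ʰ s' ≤ h (s' 0 + s' h) / 2 ≤ (s' 0 + s' h) / 2`, and multiplying by
`s' h - s' 0 ≤ 0` reverses it into the claim. The second case is the first one for `-s'`.
-/

open Set MeasureTheory

theorem ConvexOn.add_map_reflect_le {f : ℝ → ℝ} {a b x : ℝ} (hf : ConvexOn ℝ (Icc a b) f)
    (hx : x ∈ Icc a b) : f x + f (a + b - x) ≤ f a + f b := by
  obtain ⟨hax, hxb⟩ := hx
  rcases hax.trans hxb |>.eq_or_lt with rfl | hab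
  · obtain rfl : x = a := le_antisymm hxb hax
    simp
  set t := (b - x) / (b - a)
  have ht0 : 0 ≤ t := div_nonneg (by linarith) (by linarith)
  have ht1 : 0 ≤ 1 - t := by
    rw [sub_nonneg, div_le_one (by linarith)]; linarith
  have ha : a ∈ Icc a b := left_mem_Icc.2 hab.le
  have hb : b ∈ Icc a b := right_mem_Icc.2 hab.le
  have hfx := hf.2 ha hb ht0 ht1 (by ring)
  have hfy := hf.2 ha hb ht1 ht0 (by ring)
  have hxt : t • a + (1 - t) • b = x := by
    simp only [t, smul_eq_mul]; field_simp; ring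
  have hyt : (1 - t) • a + t • b = a + b - x := by
    simp only [t, smul_eq_mul]; field_simp; ring
  rw [hxt] at hfx
  rw [hyt] at hfy
  simp only [smul_eq_mul] at hfx hfy
  linarith

theorem ConvexOn.integral_le_trapezoid {f : ℝ → ℝ} {a b : ℝ} (hab : a ≤ b)
    (hf : ConvexOn ℝ (Icc a b) f) (hfi : IntervalIntegrable f volume a b) :
    ∫ x in a..b, f x ≤ (b - a) * (f a + f b) / 2 := by
  have hreflect : ∫ x in a..b, f (a + b - x) = ∫ x in a..b, f x := by
    simp [intervalIntegral.integral_comp_sub_left]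
  have hfi' : IntervalIntegrable (fun x ↦ f (a + b - x)) volume a b := by
    simpa using (hfi.comp_sub_left (a + b)).symm
  have hsum : ∫ x in a..b, (f x + f (a + b - x)) ≤ ∫ _ in a..b, (f a + f b) :=
    intervalIntegral.integral_mono_on hab (hfi.add hfi') intervalIntegrable_const
      fun x hx ↦ hf.add_map_reflect_le hx
  rw [intervalIntegral.integral_add hfi hfi', hreflect,
    intervalIntegral.integral_const, smul_eq_mul] at hsum
  linarith

theorem half_mul_le_mul_integral_of_antitoneOn_of_convexOn {f : ℝ → ℝ} {h : ℝ} (h0 : 0 ≤ h)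
    (h1 : h ≤ 1) (hanti : AntitoneOn f (Icc 0 h)) (hconv : ConvexOn ℝ (Icc 0 h) f)
    (hnonneg : 0 ≤ f 0 + f h) :
    1 / 2 * (f h - f 0) * (f 0 + f h) ≤ (f h - f 0) * ∫ u in (0 : ℝ)..h, f u := by
  have hfi : IntervalIntegrable f volume 0 h :=
    (uIcc_of_le h0 ▸ hanti).intervalIntegrable
  have hmean : ∫ u in (0 : ℝ)..h, f u ≤ (f 0 + f h) / 2 :=
    calc ∫ u in (0 : ℝ)..h, f u ≤ (h - 0) * (f 0 + f h) / 2 :=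
          hconv.integral_le_trapezoid h0 hfi
      _ ≤ (f 0 + f h) / 2 := by nlinarith
  have hdecr : f h - f 0 ≤ 0 :=
    sub_nonpos.2 (hanti (left_mem_Icc.2 h0) (right_mem_Icc.2 h0) h0)
  linear_combination mul_le_mul_of_nonpos_left hmean hdecr

theorem iwa_core_scalar_inequality_general
    (s s1 : ℝ → ℝ)
    (hint : ∀ h ∈ Set.Icc (0 : ℝ) 1, s h = ∫ u in (0 : ℝ)..h, s1 u)
    (hcase :
      ((∀ u ∈ Set.Icc (0 : ℝ) 1, 0 ≤ s1 u) ∧ AntitoneOn s1 (Set.Icc 0 1)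
        ∧ ConvexOn ℝ (Set.Icc 0 1) s1)
      ∨ ((∀ u ∈ Set.Icc (0 : ℝ) 1, s1 u ≤ 0) ∧ MonotoneOn s1 (Set.Icc 0 1)
        ∧ ConcaveOn ℝ (Set.Icc 0 1) s1)) :
    ∀ h ∈ Set.Icc (0 : ℝ) 1,
      1 / 2 * (s1 h - s1 0) * (s1 0 + s1 h) ≤ (s1 h - s1 0) * s h := by
  intro h hh
  have hsub : Icc 0 h ⊆ Icc (0 : ℝ) 1 := Icc_subset_Icc le_rfl hh.2
  have h0 : (0 : ℝ) ∈ Icc (0 : ℝ) 1 := left_mem_Icc.2 zero_le_one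
  rw [hint h hh]
  rcases hcase with ⟨hnonneg, hanti, hconv⟩ | ⟨hnonpos, hmono, hconc⟩
  · exact half_mul_le_mul_integral_of_antitoneOn_of_convexOn hh.1 hh.2 (hanti.mono hsub)
      (hconv.subset hsub (convex_Icc 0 h)) (add_nonneg (hnonneg 0 h0) (hnonneg h hh))
  · have hneg := half_mul_le_mul_integral_of_antitoneOn_of_convexOn (f := -s1) hh.1 hh.2
      (hmono.neg.mono hsub) ((hconc.subset hsub (convex_Icc 0 h)).neg)
      (by simp only [Pi.neg_apply]; linarith [hnonpos 0 h0, hnonpos h hh])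
    simp only [Pi.neg_apply, intervalIntegral.integral_neg] at hneg
    linarith

/-- The scalar inequality at the core of the proof that IWA updates satisfy
`H(z) ≤ H(g)` (inequality `eq:iwa_s`): if `s'` is either non-negative,
non-increasing and convex, or non-positive, non-decreasing and concave on
`[0,1]`, then `(1/2)(s'(h) - s'(0))(s'(0) + s'(h)) ≤ (s'(h) - s'(0)) s(h)`. -/
theorem iwa_core_scalar_inequality
    (s s1 : ℝ → ℝ) (hs0 : s 0 = 0)
    (hderiv : ∀ h ∈ Set.Icc (0 : ℝ) 1, HasDerivAt s (s1 h) h)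
    (hcont : ContinuousOn s1 (Set.Icc 0 1))
    (hint : ∀ h ∈ Set.Icc (0 : ℝ) 1, s h = ∫ u in (0 : ℝ)..h, s1 u)
    (hcase :
      ((∀ u ∈ Set.Icc (0 : ℝ) 1, 0 ≤ s1 u) ∧ AntitoneOn s1 (Set.Icc 0 1)
        ∧ ConvexOn ℝ (Set.Icc 0 1) s1)
      ∨ ((∀ u ∈ Set.Icc (0 : ℝ) 1, s1 u ≤ 0) ∧ MonotoneOn s1 (Set.Icc 0 1)
        ∧ ConcaveOn ℝ (Set.Icc 0 1) s1)) :
    ∀ h ∈ Set.Icc (0 : ℝ) 1,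
      1 / 2 * (s1 h - s1 0) * (s1 0 + s1 h) ≤ (s1 h - s1 0) * s h :=
  iwa_core_scalar_inequality_general s s1 hint hcase
end

section
/- Fix q ∈ ℝ^d with q ≠ 0, η > 0, x ∈ ℝ^d, and a convex, three times differentiable function ℓ̂ : ℝ → ℝ. Let s : [0,1] → ℝ be differentiable with s(0) = 0 and s'(h) = η ℓ̂'(⟨q, x − s(h) q⟩) for all h ∈ [0,1]. Write p(h) = ⟨q, x − s(h) q⟩, g(h) = ℓ̂'(p(h)) q, g = g(0), ℓ(w) = ℓ̂(⟨q,w⟩), θ = x/η, and let ℓ*(z) = sup_w (⟨z,w⟩ − ℓ(w)). Suppose that either (i) for all h ∈ [0,1], ℓ̂'(p(h)) ≥ 0 and ℓ̂'''(p(h)) ≥ 0, or (ii) for all h ∈ [0,1], ℓ̂'(p(h)) ≤ 0 and ℓ̂'''(p(h)) ≤ 0. Then for every h ∈ [0,1]: (η/2)‖θ − g(h)‖² + ℓ*(g(h)) ≤ (η/2)‖θ − g‖² + ℓ*(g). -/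
/-!
By the Fenchel–Young equality, `ℓ*(ℓ̂'(t) q) = ℓ̂'(t) t - ℓ̂(t)`, so after expanding the square both
sides reduce to values of one real function along the flow. Write `A = ℓ̂' ∘ p`, so that
`p' = -η‖q‖² A` and `A' = -η‖q‖² (ℓ̂'' ∘ p) A`. For fixed `h`, the function
`Ψ(y) = ‖q‖² (η/2 A(y)² - A(h) s(y)) - ℓ̂(p(y))` takes the two sides (minus `(η/2)‖θ‖²`) at `y = h`
and `y = 0`, and `Ψ' = η‖q‖² A (A' + A - A(h))`. Under (i), `A ≥ 0`, `A' ≤ 0` and `A'' ≥ 0` on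
`[0, 1]` (under (ii) all three signs flip), so convexity of `A` and `0 ≤ h - y ≤ 1` give
`A(h) - A(y) ≥ A'(y) (h - y) ≥ A'(y)`, whence `Ψ' ≤ 0` on `[0, h]`.
-/

open scoped RealInnerProductSpace
open Set

theorem ConvexOn.add_mul_sub_le_of_hasDerivAt {S : Set ℝ} {f : ℝ → ℝ} {f' x y : ℝ}
    (hfc : ConvexOn ℝ S f) (hx : x ∈ S) (hy : y ∈ S) (hf : HasDerivAt f f' x) :
    f x + f' * (y - x) ≤ f y := by
  rcases lt_trichotomy x y with hxy | rfl | hyx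
  · have := hfc.le_slope_of_hasDerivAt hx hy hxy hf
    rw [slope_def_field, le_div_iff₀ (sub_pos.2 hxy)] at this
    linarith
  · simp
  · have := hfc.slope_le_of_hasDerivAt hy hx hyx hf
    rw [slope_def_field, div_le_iff₀ (sub_pos.2 hyx)] at this
    linarith

theorem deriv_le_sub_of_deriv2_nonneg {f f' f'' : ℝ → ℝ} {u h : ℝ} (huh : u ≤ h)
    (hhu : h ≤ u + 1) (hf : ∀ y ∈ Icc u h, HasDerivAt f (f' y) y)
    (hf' : ∀ y ∈ Icc u h, HasDerivAt f' (f'' y) y) (hf'' : ∀ y ∈ Icc u h, 0 ≤ f'' y)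
    (hf'u : f' u ≤ 0) : f' u ≤ f h - f u := by
  have hconv : ConvexOn ℝ (Icc u h) f := by
    refine convexOn_of_hasDerivWithinAt2_nonneg (f' := f') (f'' := f'') (convex_Icc u h)
      (fun y hy => (hf y hy).continuousAt.continuousWithinAt) (fun y hy => ?_) (fun y hy => ?_)
      (fun y hy => ?_) <;> rw [interior_Icc] at hy
    · exact (hf y (Ioo_subset_Icc_self hy)).hasDerivWithinAt
    · exact (hf' y (Ioo_subset_Icc_self hy)).hasDerivWithinAt
    · exact hf'' y (Ioo_subset_Icc_self hy)
  have htangent := hconv.add_mul_sub_le_of_hasDerivAt (left_mem_Icc.2 huh)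
    (right_mem_Icc.2 huh) (hf u (left_mem_Icc.2 huh))
  nlinarith

theorem mul_sub_sub_deriv_nonneg {f f' f'' : ℝ → ℝ} {u h : ℝ} (huh : u ≤ h)
    (hhu : h ≤ u + 1) (hf : ∀ y ∈ Icc u h, HasDerivAt f (f' y) y)
    (hf' : ∀ y ∈ Icc u h, HasDerivAt f' (f'' y) y)
    (hsign : (∀ y ∈ Icc u h, 0 ≤ f y ∧ f' y ≤ 0 ∧ 0 ≤ f'' y)
      ∨ (∀ y ∈ Icc u h, f y ≤ 0 ∧ 0 ≤ f' y ∧ f'' y ≤ 0)) :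
    0 ≤ f u * (f h - f u - f' u) := by
  have hu : u ∈ Icc u h := left_mem_Icc.2 huh
  rcases hsign with hsign | hsign
  · have := deriv_le_sub_of_deriv2_nonneg huh hhu hf hf' (fun y hy => (hsign y hy).2.2)
      (hsign u hu).2.1
    exact mul_nonneg (hsign u hu).1 (by linarith)
  · have := deriv_le_sub_of_deriv2_nonneg (f := -f) (f' := -f') (f'' := -f'') huh hhu
      (fun y hy => (hf y hy).neg) (fun y hy => (hf' y hy).neg)
      (fun y hy => neg_nonneg.2 (hsign y hy).2.2) (neg_nonpos.2 (hsign u hu).2.1)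
    simp only [Pi.neg_apply] at this
    exact mul_nonneg_of_nonpos_of_nonpos (hsign u hu).1 (by linarith)

section InnerProductSpace

variable {E : Type*} [NormedAddCommGroup E] [InnerProductSpace ℝ E]

theorem iSup_inner_smul_sub_comp_inner_eq {l : ℝ → ℝ} (hl : ConvexOn ℝ univ l) {q : E}
    (hq : q ≠ 0) {a t : ℝ} (ht : HasDerivAt l a t) :
    ⨆ w : E, ((⟪a • q, w⟫ - l ⟪q, w⟫ : ℝ) : EReal) = ((a * t - l t : ℝ) : EReal) := by
  refine le_antisymm (iSup_le fun w => EReal.coe_le_coe_iff.2 ?_)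
    (le_iSup_of_le ((t / ‖q‖ ^ 2) • q) ?_)
  · have := hl.add_mul_sub_le_of_hasDerivAt (mem_univ t) (mem_univ ⟪q, w⟫) ht
    rw [real_inner_smul_left]
    linarith
  · have hqq : ‖q‖ ^ 2 ≠ 0 := pow_ne_zero 2 (norm_ne_zero_iff.2 hq)
    have hinner : ⟪q, (t / ‖q‖ ^ 2) • q⟫ = t := by
      rw [real_inner_smul_right, real_inner_self_eq_norm_sq, div_mul_cancel₀ t hqq]
    rw [real_inner_smul_left, hinner]

theorem half_mul_norm_inv_smul_sub_smul_sq_add_mul_inner {η : ℝ} (hη : η ≠ 0) (x q : E)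
    (a s : ℝ) :
    η / 2 * ‖η⁻¹ • x - a • q‖ ^ 2 + a * ⟪q, x - s • q⟫
      = η / 2 * ‖η⁻¹ • x‖ ^ 2 + ‖q‖ ^ 2 * (η / 2 * a ^ 2 - a * s) := by
  rw [norm_sub_sq_real, inner_sub_right, real_inner_smul_left, real_inner_smul_right,
    real_inner_smul_right, real_inner_self_eq_norm_sq, real_inner_comm x q]
  simp only [norm_smul, Real.norm_eq_abs, mul_pow, sq_abs]
  field_simp
  ring

end InnerProductSpace

theorem ConvexOn.deriv_deriv_nonneg {l : ℝ → ℝ} (hl : ConvexOn ℝ univ l)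
    (hd : Differentiable ℝ l) (t : ℝ) : 0 ≤ deriv (deriv l) t :=
  (monotoneOn_univ.1 (hl.monotoneOn_deriv fun y _ => hd y)).deriv_nonneg

/-- For `L = ‖q‖²` and `a = ℓ̂'(p h)`, the values at `y = h` and `y = 0` are
`ψ*(θ - g(h)) + ℓ*(g(h))` and `ψ*(θ - g) + ℓ*(g)`, each minus `(η/2)‖θ‖²`. -/
noncomputable def iwaLyapunov (l s p : ℝ → ℝ) (η L a y : ℝ) : ℝ :=
  L * (η / 2 * deriv l (p y) ^ 2 - a * s y) - l (p y)

section Flow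

variable {l s p : ℝ → ℝ} {η L c k : ℝ}

theorem mul_sub_sub_deriv_nonneg_of_flow (hl : ConvexOn ℝ univ l) (hd1 : Differentiable ℝ l)
    (hd2 : Differentiable ℝ (deriv l)) (hd3 : Differentiable ℝ (deriv (deriv l))) (hk : 0 ≤ k)
    (hp : ∀ y ∈ Icc (0 : ℝ) 1, HasDerivAt p (-k * deriv l (p y)) y)
    (hsign : (∀ y ∈ Icc (0 : ℝ) 1, 0 ≤ deriv l (p y) ∧ 0 ≤ deriv (deriv (deriv l)) (p y))
      ∨ (∀ y ∈ Icc (0 : ℝ) 1, deriv l (p y) ≤ 0 ∧ deriv (deriv (deriv l)) (p y) ≤ 0))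
    {u h : ℝ} (hu : 0 ≤ u) (huh : u ≤ h) (hh : h ≤ 1) :
    0 ≤ deriv l (p u) * (deriv l (p h) - deriv l (p u)
      - deriv (deriv l) (p u) * (-k * deriv l (p u))) := by
  set A : ℝ → ℝ := fun y => deriv l (p y)
  set A' : ℝ → ℝ := fun y => deriv (deriv l) (p y) * (-k * A y)
  set A'' : ℝ → ℝ := fun y => deriv (deriv (deriv l)) (p y) * (-k * A y) * (-k * A y)
    + deriv (deriv l) (p y) * (-k * A' y)
  have hsub : Icc u h ⊆ Icc 0 1 := Icc_subset_Icc hu hh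
  have hA : ∀ y ∈ Icc u h, HasDerivAt A (A' y) y := fun y hy =>
    (hd2 (p y)).hasDerivAt.comp y (hp y (hsub hy))
  have hA' : ∀ y ∈ Icc u h, HasDerivAt A' (A'' y) y := fun y hy =>
    ((hd3 (p y)).hasDerivAt.comp y (hp y (hsub hy))).mul ((hA y hy).const_mul (-k))
  have hB := hl.deriv_deriv_nonneg hd1
  refine mul_sub_sub_deriv_nonneg huh (by linarith) hA hA' ?_
  rcases hsign with hsign | hsign
  · refine Or.inl fun y hy => ?_
    obtain ⟨hA0, hC0⟩ := hsign y (hsub hy)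
    have hA'0 : A' y ≤ 0 := by
      simp only [A', A]
      nlinarith [mul_nonneg (mul_nonneg hk hA0) (hB (p y))]
    refine ⟨hA0, hA'0, ?_⟩
    simp only [A'']
    nlinarith [mul_nonneg hC0 (mul_self_nonneg (-k * A y)),
      mul_nonneg (mul_nonneg hk (neg_nonneg.2 hA'0)) (hB (p y))]
  · refine Or.inr fun y hy => ?_
    obtain ⟨hA0, hC0⟩ := hsign y (hsub hy)
    have hA'0 : 0 ≤ A' y := by
      simp only [A', A]
      nlinarith [mul_nonneg (mul_nonneg hk (neg_nonneg.2 hA0)) (hB (p y))]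
    refine ⟨hA0, hA'0, ?_⟩
    simp only [A'']
    nlinarith [mul_nonneg (neg_nonneg.2 hC0) (mul_self_nonneg (-k * A y)),
      mul_nonneg (mul_nonneg hk hA'0) (hB (p y))]

theorem antitoneOn_iwaLyapunov (hl : ConvexOn ℝ univ l)
    (hd1 : Differentiable ℝ l) (hd2 : Differentiable ℝ (deriv l))
    (hd3 : Differentiable ℝ (deriv (deriv l))) (hη : 0 ≤ η) (hL : 0 ≤ L)
    (hp : ∀ y, p y = c - L * s y) (hs : ∀ y ∈ Icc (0 : ℝ) 1, HasDerivAt s (η * deriv l (p y)) y)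
    (hsign : (∀ y ∈ Icc (0 : ℝ) 1, 0 ≤ deriv l (p y) ∧ 0 ≤ deriv (deriv (deriv l)) (p y))
      ∨ (∀ y ∈ Icc (0 : ℝ) 1, deriv l (p y) ≤ 0 ∧ deriv (deriv (deriv l)) (p y) ≤ 0))
    {h : ℝ} (hh : h ∈ Icc (0 : ℝ) 1) :
    AntitoneOn (iwaLyapunov l s p η L (deriv l (p h))) (Icc 0 h) := by
  have hp' : ∀ y ∈ Icc (0 : ℝ) 1, HasDerivAt p (-(η * L) * deriv l (p y)) y := fun y hy =>
    ((((hs y hy).const_mul L).const_sub c).congr_deriv (by ring)).congr_of_eventuallyEq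
      (.of_forall hp)
  have hderiv : ∀ y ∈ Icc (0 : ℝ) 1, HasDerivAt (iwaLyapunov l s p η L (deriv l (p h)))
      (η * L * deriv l (p y) * (deriv (deriv l) (p y) * (-(η * L) * deriv l (p y))
        + deriv l (p y) - deriv l (p h))) y := fun y hy => by
    have hA := (hd2 (p y)).hasDerivAt.comp y (hp' y hy)
    have hΨ := ((((hA.pow 2).const_mul (η / 2)).sub
      ((hs y hy).const_mul (deriv l (p h)))).const_mul L).sub
      ((hd1 (p y)).hasDerivAt.comp y (hp' y hy))
    exact hΨ.congr_deriv (by simp only [Nat.cast_ofNat, Function.comp_apply]; ring)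
  have hsub : Icc 0 h ⊆ Icc (0 : ℝ) 1 := Icc_subset_Icc_right hh.2
  refine antitoneOn_of_hasDerivWithinAt_nonpos (convex_Icc 0 h)
    (fun y hy => (hderiv y (hsub hy)).continuousAt.continuousWithinAt)
    (fun y hy => (hderiv y (hsub (interior_subset hy))).hasDerivWithinAt) (fun y hy => ?_)
  rw [interior_Icc] at hy
  have key := mul_sub_sub_deriv_nonneg_of_flow hl hd1 hd2 hd3 (mul_nonneg hη hL) hp' hsign
    hy.1.le hy.2.le hh.2
  nlinarith [mul_nonneg (mul_nonneg hη hL) key]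

end Flow

/-- The pointwise inequality in the proof of Theorem 3.2: under the sign
conditions on `ℓ̂'` and `ℓ̂'''` along the gradient flow, for every `h ∈ [0,1]`
we have `ψ*(θ - g(h)) + ℓ*(g(h)) ≤ ψ*(θ - g) + ℓ*(g)`, where
`ψ*(θ) = (η/2)‖θ‖²`, `θ = x/η`, `g(h) = ℓ̂'(p(h)) q` and `g = g(0)`. -/
theorem iwa_pointwise_conjugate_inequality
    (d : ℕ) (q : EuclideanSpace ℝ (Fin d)) (hq : q ≠ 0) (η : ℝ) (hη : 0 < η)
    (x : EuclideanSpace ℝ (Fin d))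
    (l : ℝ → ℝ) (hconv : ConvexOn ℝ Set.univ l)
    (hd1 : Differentiable ℝ l) (hd2 : Differentiable ℝ (deriv l))
    (hd3 : Differentiable ℝ (deriv (deriv l)))
    (s : ℝ → ℝ) (hs0 : s 0 = 0)
    (p : ℝ → ℝ) (hp : ∀ h, p h = ⟪q, x - s h • q⟫)
    (hsODE : ∀ h ∈ Set.Icc (0 : ℝ) 1, HasDerivAt s (η * deriv l (p h)) h)
    -- g(h) = ℓ̂'(p(h)) q
    (G : ℝ → EuclideanSpace ℝ (Fin d)) (hG : ∀ h, G h = deriv l (p h) • q)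
    -- ℓ*(z) for ℓ(w) = ℓ̂(⟨q, w⟩)
    (lstar : EuclideanSpace ℝ (Fin d) → EReal)
    (hlstar : ∀ zz, lstar zz = ⨆ w, ((⟪zz, w⟫ - l ⟪q, w⟫ : ℝ) : EReal))
    -- sign conditions: (i) or (ii)
    (hsign : (∀ h ∈ Set.Icc (0 : ℝ) 1,
        0 ≤ deriv l (p h) ∧ 0 ≤ deriv (deriv (deriv l)) (p h))
      ∨ (∀ h ∈ Set.Icc (0 : ℝ) 1,
        deriv l (p h) ≤ 0 ∧ deriv (deriv (deriv l)) (p h) ≤ 0)) :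
    ∀ h ∈ Set.Icc (0 : ℝ) 1,
      ((η / 2 * ‖η⁻¹ • x - G h‖ ^ 2 : ℝ) : EReal) + lstar (G h)
        ≤ ((η / 2 * ‖η⁻¹ • x - G 0‖ ^ 2 : ℝ) : EReal) + lstar (G 0) := by
  intro h hh
  have hconj : ∀ y, lstar (G y) = ((deriv l (p y) * p y - l (p y) : ℝ) : EReal) := fun y => by
    rw [hG, hlstar]
    exact iSup_inner_smul_sub_comp_inner_eq hconv hq (hd1 (p y)).hasDerivAt
  have hexpand : ∀ y, η / 2 * ‖η⁻¹ • x - G y‖ ^ 2 + (deriv l (p y) * p y - l (p y))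
      = η / 2 * ‖η⁻¹ • x‖ ^ 2 + iwaLyapunov l s p η (‖q‖ ^ 2) (deriv l (p y)) y := fun y => by
    rw [hG, iwaLyapunov, ← add_sub_assoc, hp,
      half_mul_norm_inv_smul_sub_smul_sq_add_mul_inner hη.ne', add_sub_assoc]
  have hp' : ∀ y, p y = ⟪q, x⟫ - ‖q‖ ^ 2 * s y := fun y => by
    rw [hp, inner_sub_right, real_inner_smul_right, real_inner_self_eq_norm_sq, mul_comm]
  have hdecay := antitoneOn_iwaLyapunov hconv hd1 hd2 hd3 hη.le (sq_nonneg ‖q‖) hp' hsODE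
    hsign hh ⟨le_rfl, hh.1⟩ ⟨hh.1, le_rfl⟩ hh.1
  rw [hconj, hconj, ← EReal.coe_add, ← EReal.coe_add, EReal.coe_le_coe_iff, hexpand, hexpand]
  simp only [iwaLyapunov, hs0, mul_zero, sub_zero] at hdecay ⊢
  linarith
end

section
/- Fix q ∈ ℝ^d with q ≠ 0, η > 0, x ∈ ℝ^d, and y ∈ ℝ, and write p = ⟨q, x⟩. Define s : [0,∞) → ℝ by s(h) = ((p − y)/‖q‖²)(1 − e^{−h η ‖q‖²}). Then s(0) = 0 and s'(h) = η (⟨q, x − s(h) q⟩ − y) for all h ≥ 0; that is, s is the IWA scaling function for the squared loss ℓ̂(r) = (1/2)(r − y)². -/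
open scoped RealInnerProductSpace

/-!
Since `⟪q, x - s q⟫ = p - s ‖q‖²`, the IWA equation for the squared loss is the linear ODE
`s' = η ((p - y) - ‖q‖² s)`, `s 0 = 0`, whose solution is the exponential relaxation
`s h = (p - y)/‖q‖² (1 - e^{-hη‖q‖²})`.
-/
theorem hasDerivAt_div_mul_one_sub_exp (a l κ : ℝ) (hκ : κ ≠ 0) (t : ℝ) :
    HasDerivAt (fun t => a / κ * (1 - Real.exp (-(t * l * κ))))
      (l * (a - κ * (a / κ * (1 - Real.exp (-(t * l * κ)))))) t := by
  have hexponent : HasDerivAt (fun t : ℝ => -(t * l * κ)) (-(l * κ)) t := by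
    simpa only [Pi.neg_def, one_mul, mul_assoc] using ((hasDerivAt_id' t).mul_const (l * κ)).neg
  refine ((hexponent.exp.const_sub 1).const_mul (a / κ)).congr_deriv ?_
  field_simp
  ring

theorem inner_sub_smul_self {E : Type*} [NormedAddCommGroup E] [InnerProductSpace ℝ E]
    (q x : E) (c : ℝ) : ⟪q, x - c • q⟫ = ⟪q, x⟫ - c * ‖q‖ ^ 2 := by
  rw [inner_sub_right, inner_smul_right, real_inner_self_eq_norm_sq]

theorem iwa_scaling_squared_loss_general
    (d : ℕ) (q : EuclideanSpace ℝ (Fin d)) (hq : q ≠ 0) (η : ℝ)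
    (x : EuclideanSpace ℝ (Fin d)) (y : ℝ) (p : ℝ) (hp : p = ⟪q, x⟫)
    (s : ℝ → ℝ)
    (hs : ∀ h : ℝ, s h = (p - y) / ‖q‖ ^ 2 * (1 - Real.exp (-(h * η * ‖q‖ ^ 2)))) :
    s 0 = 0 ∧ ∀ h : ℝ, 0 ≤ h → HasDerivAt s (η * (⟪q, x - s h • q⟫ - y)) h := by
  have hs_eq : s = fun h => (p - y) / ‖q‖ ^ 2 * (1 - Real.exp (-(h * η * ‖q‖ ^ 2))) := funext hs
  refine ⟨by simp [hs_eq], fun h _ => ?_⟩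
  have hq2 : ‖q‖ ^ 2 ≠ 0 := pow_ne_zero 2 (norm_ne_zero_iff.mpr hq)
  have hderiv := hasDerivAt_div_mul_one_sub_exp (p - y) η (‖q‖ ^ 2) hq2 h
  rw [← hs_eq] at hderiv
  convert hderiv using 2
  rw [inner_sub_smul_self, ← hp, hs_eq]
  ring

/-- The explicit IWA scaling function for the squared loss
`ℓ̂(r) = (1/2)(r - y)²`: `s(h) = ((p - y)/‖q‖²)(1 - e^{-hη‖q‖²})` satisfies
`s(0) = 0` and `s'(h) = η(⟨q, x - s(h) q⟩ - y)` for all `h ≥ 0`. -/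
theorem iwa_scaling_squared_loss
    (d : ℕ) (q : EuclideanSpace ℝ (Fin d)) (hq : q ≠ 0) (η : ℝ) (hη : 0 < η)
    (x : EuclideanSpace ℝ (Fin d)) (y : ℝ) (p : ℝ) (hp : p = ⟪q, x⟫)
    (s : ℝ → ℝ)
    (hs : ∀ h : ℝ, s h = (p - y) / ‖q‖ ^ 2 * (1 - Real.exp (-(h * η * ‖q‖ ^ 2)))) :
    s 0 = 0 ∧ ∀ h : ℝ, 0 ≤ h → HasDerivAt s (η * (⟪q, x - s h • q⟫ - y)) h :=
  iwa_scaling_squared_loss_general d q hq η x y p hp s hs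
end

section
/- Fix q ∈ ℝ^d with q ≠ 0, η > 0, and x ∈ ℝ^d with p = ⟨q, x⟩ < 1. Define s : [0,∞) → ℝ by s(h) = (p − 1 + √((p−1)² + 2 h η ‖q‖²)) / ‖q‖². Then s(0) = 0, ⟨q, x − s(h) q⟩ = 1 − √((p−1)² + 2 h η ‖q‖²) < 1 for all h ≥ 0, and s'(h) = η / (1 − ⟨q, x − s(h) q⟩) for all h ≥ 0; that is, s is the IWA scaling function for the logarithmic loss with label y = 0, ℓ̂(r) = −ln(1 − r). -/
/-! The prediction along the ray is `⟪q, x - s • q⟫ = p - s ‖q‖²`, which the formula for `s`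
turns into `1 - √((p-1)² + 2hη‖q‖²)`; and differentiating the formula gives
`s' = η / √((p-1)² + 2hη‖q‖²)`, which is `η / (1 - prediction)`. -/

open scoped RealInnerProductSpace

theorem inner_sub_smul_self_right {E : Type*} [NormedAddCommGroup E] [InnerProductSpace ℝ E]
    (q x : E) (t : ℝ) : ⟪q, x - t • q⟫ = ⟪q, x⟫ - t * ‖q‖ ^ 2 := by
  rw [inner_sub_right, inner_smul_right, real_inner_self_eq_norm_sq]

theorem hasDerivAt_add_sqrt_sq_add_div {a κ c h : ℝ} (hc : c ≠ 0)
    (hpos : 0 < a ^ 2 + 2 * h * κ * c) :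
    HasDerivAt (fun t => (a + √(a ^ 2 + 2 * t * κ * c)) / c)
      (κ / √(a ^ 2 + 2 * h * κ * c)) h := by
  have hlin : HasDerivAt (fun t => a ^ 2 + 2 * t * κ * c) (2 * κ * c) h := by
    simpa [mul_comm, mul_left_comm, mul_assoc] using
      ((hasDerivAt_id h).const_mul (2 * κ * c)).const_add (a ^ 2)
  refine (((hlin.sqrt hpos.ne').const_add a).div_const c).congr_deriv ?_
  field_simp

/-- The explicit IWA scaling function for the logarithmic loss with label
`y = 0`, `ℓ̂(r) = -ln(1 - r)`: `s(h) = (p - 1 + √((p-1)² + 2hη‖q‖²)) / ‖q‖²`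
satisfies `s(0) = 0`, the prediction along the flow is `⟨q, x - s(h) q⟩ =
1 - √((p-1)² + 2hη‖q‖²) < 1`, and `s'(h) = η / (1 - ⟨q, x - s(h) q⟩)` for all
`h ≥ 0`. -/
theorem iwa_scaling_log_loss_label_zero
    (d : ℕ) (q : EuclideanSpace ℝ (Fin d)) (hq : q ≠ 0) (η : ℝ) (hη : 0 < η)
    (x : EuclideanSpace ℝ (Fin d)) (p : ℝ) (hp : p = ⟪q, x⟫) (hplt : p < 1)
    (s : ℝ → ℝ)
    (hs : ∀ h : ℝ,
      s h = (p - 1 + Real.sqrt ((p - 1) ^ 2 + 2 * h * η * ‖q‖ ^ 2)) / ‖q‖ ^ 2) :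
    s 0 = 0 ∧ ∀ h : ℝ, 0 ≤ h →
      (⟪q, x - s h • q⟫ = 1 - Real.sqrt ((p - 1) ^ 2 + 2 * h * η * ‖q‖ ^ 2))
      ∧ (⟪q, x - s h • q⟫ < 1)
      ∧ HasDerivAt s (η / (1 - ⟪q, x - s h • q⟫)) h := by
  have hq2 : 0 < ‖q‖ ^ 2 := pow_pos (norm_pos_iff.mpr hq) 2
  have hinner : ∀ h, ⟪q, x - s h • q⟫ = 1 - √((p - 1) ^ 2 + 2 * h * η * ‖q‖ ^ 2) := by
    intro h
    rw [inner_sub_smul_self_right, ← hp, hs]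
    field_simp
    ring
  refine ⟨?_, fun h hh => ?_⟩
  · rw [hs, mul_zero, zero_mul, zero_mul, add_zero, Real.sqrt_sq_eq_abs,
      abs_of_neg (sub_neg.mpr hplt), add_neg_cancel, zero_div]
  have hpos : 0 < (p - 1) ^ 2 + 2 * h * η * ‖q‖ ^ 2 := by
    have : 0 < (p - 1) ^ 2 := sq_pos_of_neg (sub_neg.mpr hplt)
    positivity
  refine ⟨hinner h, ?_, ?_⟩
  · rw [hinner h, sub_lt_self_iff]
    exact Real.sqrt_pos.mpr hpos
  · rw [hinner h, sub_sub_cancel, funext hs]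
    exact hasDerivAt_add_sqrt_sq_add_div hq2.ne' hpos
end

section
/- Fix q ∈ ℝ^d with q ≠ 0, η > 0, x ∈ ℝ^d, and y ∈ ℝ, and write p = ⟨q, x⟩. Consider the squared loss ℓ(w) = (1/2)(⟨q,w⟩ − y)² with conjugate ℓ*(z) = sup_w (⟨z,w⟩ − ℓ(w)), and define H(z) = (η/2)‖x/η − z‖² + ℓ*(z). Let g = (p − y) q and let z = ((p − y)(1 − e^{−η ‖q‖²}) / (η ‖q‖²)) q be the IWA dual vector. Then H(z) ≤ H(g). -/
open scoped RealInnerProductSpace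

/-
Along the line `ℝ q` everything is explicit: `ℓ*(c q) = c y + c²/2` (the supremum is attained
where `⟪q, w⟫ = y + c`), so with `u = η‖q‖²` and `a = p - y`,
`H(c q) = const + ((1 + u) c² - 2 a c) / 2`, a parabola in `c` with vertex `a / (1 + u)`.
Now `g = a q` and `z = s a q` with `s = (1 - e^{-u}) / u`, and `1 / (1 + u) ≤ s ≤ 1`
(both are `1 + t ≤ e^t`), so `s a` lies between the vertex and `a`.
-/

namespace Real

theorem one_sub_exp_neg_div_le_one {u : ℝ} (hu : 0 < u) : (1 - exp (-u)) / u ≤ 1 := by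
  rw [div_le_one hu]
  linarith [add_one_le_exp (-u)]

theorem inv_one_add_le_one_sub_exp_neg_div {u : ℝ} (hu : 0 < u) :
    (1 + u)⁻¹ ≤ (1 - exp (-u)) / u := by
  have hexp : (1 + u) * exp (-u) ≤ 1 := by
    calc (1 + u) * exp (-u) ≤ exp u * exp (-u) := by
          gcongr; linarith [add_one_le_exp u]
      _ = 1 := by rw [← exp_add, add_neg_cancel, exp_zero]
  rw [inv_le_iff_one_le_mul₀ (by positivity), div_mul_eq_mul_div, le_div_iff₀ hu]
  linarith

end Real

theorem mul_sq_sub_two_mul_le_of_inv_le {k t : ℝ} (hk : 0 < k) (ht₀ : k⁻¹ ≤ t) (ht₁ : t ≤ 1)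
    (a : ℝ) : k * (t * a) ^ 2 - 2 * (t * a) * a ≤ k * a ^ 2 - 2 * a ^ 2 := by
  have hk₁ : 1 ≤ k * t := by rwa [← inv_mul_le_iff₀ hk, mul_one]
  have hfactor : k * a ^ 2 - 2 * a ^ 2 - (k * (t * a) ^ 2 - 2 * (t * a) * a)
      = a ^ 2 * (1 - t) * (k * (1 + t) - 2) := by ring
  have hnonneg : 0 ≤ a ^ 2 * (1 - t) * (k * (1 + t) - 2) :=
    mul_nonneg (mul_nonneg (sq_nonneg a) (by linarith)) (by nlinarith)
  linarith

section InnerProductSpace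

variable {E : Type*} [NormedAddCommGroup E] [InnerProductSpace ℝ E]

theorem iSup_inner_smul_sub_half_sq {q : E} (hq : q ≠ 0) (y c : ℝ) :
    ⨆ w : E, ((⟪c • q, w⟫ - 1 / 2 * (⟪q, w⟫ - y) ^ 2 : ℝ) : EReal)
      = ((c * y + c ^ 2 / 2 : ℝ) : EReal) := by
  set w₀ : E := ((y + c) / ‖q‖ ^ 2) • q
  have hw₀ : ⟪q, w₀⟫ = y + c := by
    rw [real_inner_smul_right, real_inner_self_eq_norm_sq, div_mul_cancel₀ _ (by positivity)]
  refine le_antisymm (iSup_le fun w => ?_) (le_iSup_of_le w₀ ?_) <;>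
    rw [EReal.coe_le_coe_iff, real_inner_smul_left]
  · nlinarith [sq_nonneg (⟪q, w⟫ - (y + c))]
  · rw [hw₀]
    linarith

theorem half_mul_norm_inv_smul_sub_smul_sq (x q : E) {η : ℝ} (hη : η ≠ 0) (c : ℝ) :
    η / 2 * ‖η⁻¹ • x - c • q‖ ^ 2
      = η / 2 * ‖η⁻¹ • x‖ ^ 2 + (η * ‖q‖ ^ 2 * c ^ 2 - 2 * c * ⟪q, x⟫) / 2 := by
  rw [norm_sub_sq_real, real_inner_smul_left, real_inner_smul_right, real_inner_comm,
    norm_smul c q, mul_pow, Real.norm_eq_abs, sq_abs]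
  field_simp
  ring

end InnerProductSpace

/-- The IWA dual vector for the squared loss `ℓ(w) = (1/2)(⟨q,w⟩ - y)²`
satisfies `H(z) ≤ H(g)`, where `g = (p - y) q` is the gradient at `x`,
`z = ((p - y)(1 - e^{-η‖q‖²})/(η‖q‖²)) q` the IWA dual vector, and
`H(z) = (η/2)‖x/η - z‖² + ℓ*(z)`. -/
theorem iwa_squared_loss_H_le
    (d : ℕ) (q : EuclideanSpace ℝ (Fin d)) (hq : q ≠ 0) (η : ℝ) (hη : 0 < η)
    (x : EuclideanSpace ℝ (Fin d)) (y : ℝ) (p : ℝ) (hp : p = ⟪q, x⟫)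
    (lstar : EuclideanSpace ℝ (Fin d) → EReal)
    (hlstar : ∀ zz, lstar zz = ⨆ w, ((⟪zz, w⟫ - 1 / 2 * (⟪q, w⟫ - y) ^ 2 : ℝ) : EReal))
    (H : EuclideanSpace ℝ (Fin d) → EReal)
    (hH : ∀ zz, H zz = ((η / 2 * ‖η⁻¹ • x - zz‖ ^ 2 : ℝ) : EReal) + lstar zz)
    (g z : EuclideanSpace ℝ (Fin d))
    (hg : g = (p - y) • q)
    (hz : z = ((p - y) * (1 - Real.exp (-(η * ‖q‖ ^ 2))) / (η * ‖q‖ ^ 2)) • q) :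
    H z ≤ H g := by
  set u := η * ‖q‖ ^ 2 with hu_def
  have hu : 0 < u := by positivity
  have H_smul (c : ℝ) : H (c • q)
      = ((η / 2 * ‖η⁻¹ • x‖ ^ 2 + ((1 + u) * c ^ 2 - 2 * c * (p - y)) / 2 : ℝ) : EReal) := by
    rw [hH, hlstar, iSup_inner_smul_sub_half_sq hq, ← EReal.coe_add,
      half_mul_norm_inv_smul_sub_smul_sq x q hη.ne', ← hp]
    congr 1
    rw [hu_def]
    ring
  rw [hz, hg, mul_div_assoc, H_smul, H_smul, EReal.coe_le_coe_iff]
  have hparabola := mul_sq_sub_two_mul_le_of_inv_le (by linarith)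
    (Real.inv_one_add_le_one_sub_exp_neg_div hu) (Real.one_sub_exp_neg_div_le_one hu) (p - y)
  linarith
end
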